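/- Let p be a prime and f ∈ (F_p[t])[x] a polynomial that is monic of positive degree in x, and set g := Res_x(f, X^p − X) ∈ F_p[t]. Then for every t₀ ∈ F_p: g(t₀) = 0 if and only if there exists x₀ ∈ F_p with f(t₀, x₀) = 0. -/

import Mathlib

open Polynomial

/-- The Sylvester matrix of two polynomials `f` and `g` over a commutative ring:
a `(natDegree f + natDegree g) × (natDegree f + natDegree g)` matrix, whose first
`natDegree g` rows carry the shifted coefficient sequences of `f` (from the leading
coefficient down), and whose remaining `natDegree f` rows carry the shifted
coefficient sequences of `g`. -/
noncomputable def sylvesterMatrix {R : Type*} [CommRing R] (f g : Polynomial R) :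
    Matrix (Fin (f.natDegree + g.natDegree)) (Fin (f.natDegree + g.natDegree)) R :=
  Matrix.of fun i j =>
    if (i : ℕ) < g.natDegree then
      if (i : ℕ) ≤ (j : ℕ) ∧ (j : ℕ) ≤ (i : ℕ) + f.natDegree then
        f.coeff (f.natDegree + i - j)
      else 0
    else
      if (i : ℕ) - g.natDegree ≤ (j : ℕ) ∧ (j : ℕ) ≤ ((i : ℕ) - g.natDegree) + g.natDegree then
        g.coeff (g.natDegree + ((i : ℕ) - g.natDegree) - j)
      else 0

/-- The resultant of two polynomials: the determinant of their Sylvester matrix. -/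
noncomputable def resultant {R : Type*} [CommRing R] (f g : Polynomial R) : R :=
  (sylvesterMatrix f g).det

/-! The Sylvester matrix above is the transpose of Mathlib's `Polynomial.sylvester` with rows and
columns listed in reverse order, so the two resultants agree. For monic polynomials the resultant
commutes with the specialization `t ↦ t₀`. Over `F_p`, `X ^ p - X = ∏ a, (X - a)`, so `f` is
coprime to it iff `f` has no root in `F_p`, and over a field the resultant vanishes exactly when
the two polynomials are not coprime. -/

theorem sylvesterMatrix_eq_submatrix_transpose_sylvester {R : Type*} [CommRing R] (f g : R[X]) :
    sylvesterMatrix f g =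
      (sylvester f g f.natDegree g.natDegree).transpose.submatrix Fin.rev Fin.rev := by
  ext ⟨i, hi⟩ ⟨j, hj⟩
  rcases lt_or_ge i g.natDegree with hig | hig
  · have hrev : Fin.rev (⟨i, hi⟩ : Fin _) =
        Fin.natAdd f.natDegree ⟨g.natDegree - 1 - i, by omega⟩ := Fin.ext (by simp; omega)
    simp only [Matrix.submatrix_apply, Matrix.transpose_apply, hrev, sylvester, sylvesterMatrix,
      Matrix.of_apply, Fin.addCases_right, if_pos hig, Set.mem_Icc, Fin.val_rev]
    split_ifs <;> first | rfl | omega | (congr 1; omega)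
  · have hrev : Fin.rev (⟨i, hi⟩ : Fin _) =
        Fin.castAdd g.natDegree ⟨f.natDegree + g.natDegree - 1 - i, by omega⟩ :=
      Fin.ext (by simp; omega)
    simp only [Matrix.submatrix_apply, Matrix.transpose_apply, hrev, sylvester, sylvesterMatrix,
      Matrix.of_apply, Fin.addCases_left, if_neg (not_lt.mpr hig), Set.mem_Icc, Fin.val_rev]
    split_ifs <;> first | rfl | omega | (congr 1; omega)

theorem resultant_eq_polynomial_resultant {R : Type*} [CommRing R] (f g : R[X]) :
    _root_.resultant f g = Polynomial.resultant f g := by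
  rw [_root_.resultant, sylvesterMatrix_eq_submatrix_transpose_sylvester]
  exact (Matrix.det_submatrix_equiv_self Fin.revPerm _).trans (Matrix.det_transpose _)

theorem Polynomial.resultant_map_of_monic {R S : Type*} [CommRing R] [CommRing S] [Nontrivial S]
    (φ : R →+* S) {f g : R[X]} (hf : f.Monic) (hg : g.Monic) :
    Polynomial.resultant (f.map φ) (g.map φ) = φ (Polynomial.resultant f g) := by
  rw [← resultant_map_map, hf.natDegree_map, hg.natDegree_map]

namespace FiniteField

variable {K : Type*} [Field K] [Fintype K]

theorem X_pow_card_sub_X_eq_prod : (X ^ Fintype.card K - X : K[X]) = ∏ a : K, (X - C a) := by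
  have hmonic : (X ^ Fintype.card K - X : K[X]).Monic :=
    monic_X_pow_sub (by rw [degree_X]; exact_mod_cast Fintype.one_lt_card)
  have hcard : Multiset.card (X ^ Fintype.card K - X : K[X]).roots =
      (X ^ Fintype.card K - X : K[X]).natDegree := by
    rw [roots_X_pow_card_sub_X, X_pow_card_sub_X_natDegree_eq K Fintype.one_lt_card]
    rfl
  rw [← prod_multiset_X_sub_C_of_monic_of_roots_card_eq hmonic hcard, roots_X_pow_card_sub_X]
  rfl

theorem isCoprime_X_pow_card_sub_X_iff (f : K[X]) :
    IsCoprime f (X ^ Fintype.card K - X) ↔ ∀ a, ¬ f.IsRoot a := by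
  rw [X_pow_card_sub_X_eq_prod, IsCoprime.prod_right_iff]
  refine forall_congr' fun a => ?_
  rw [isCoprime_comm, (irreducible_X_sub_C a).coprime_iff_not_dvd, dvd_iff_isRoot]
  simp

theorem resultant_X_pow_card_sub_X_eq_zero_iff (f : K[X]) :
    Polynomial.resultant f (X ^ Fintype.card K - X) = 0 ↔ ∃ a, f.IsRoot a := by
  rw [resultant_eq_zero_iff, isCoprime_X_pow_card_sub_X_iff]
  simp [X_pow_card_sub_X_ne_zero K Fintype.one_lt_card]

end FiniteField

theorem resultant_frobenius_eval_eq_zero_iff_general (p : ℕ) [Fact p.Prime]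
    (f : Polynomial (Polynomial (ZMod p))) (hmonic : f.Monic)
    (t₀ : ZMod p) :
    (_root_.resultant f (X ^ p - X)).eval t₀ = 0 ↔
      ∃ x₀ : ZMod p, (f.eval (C x₀)).eval t₀ = 0 := by
  have hX : (X ^ p - X : (ZMod p)[X][X]).Monic :=
    monic_X_pow_sub (by rw [degree_X]; exact_mod_cast (Fact.out : p.Prime).one_lt)
  have hspec : (_root_.resultant f (X ^ p - X)).eval t₀ =
      Polynomial.resultant (f.map (evalRingHom t₀)) (X ^ Fintype.card (ZMod p) - X) := by
    rw [resultant_eq_polynomial_resultant, ZMod.card, ← coe_evalRingHom,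
      ← resultant_map_of_monic _ hmonic hX, Polynomial.map_sub, Polynomial.map_pow, map_X]
  simp only [hspec, FiniteField.resultant_X_pow_card_sub_X_eq_zero_iff, IsRoot,
    map_evalRingHom_eval]

/-- For monic `f ∈ (F_p[t])[x]` of positive degree and `g = Res_x(f, X^p − X)`:
`g(t₀) = 0` iff `f(t₀, x₀) = 0` for some `x₀ ∈ F_p`. -/
theorem resultant_frobenius_eval_eq_zero_iff (p : ℕ) [Fact p.Prime]
    (f : Polynomial (Polynomial (ZMod p))) (hmonic : f.Monic) (hdeg : 0 < f.natDegree)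
    (t₀ : ZMod p) :
    (_root_.resultant f (X ^ p - X)).eval t₀ = 0 ↔
      ∃ x₀ : ZMod p, (f.eval (C x₀)).eval t₀ = 0 :=
  resultant_frobenius_eval_eq_zero_iff_general p f hmonic t₀
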